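/- arXiv:2603.19851 — 3 statements merged into one kernel-verified Lean document; each statement's English description precedes it below -/
import Mathlib

section
/- In the Evaluator Machine for the Until operator α₀ U_{[t1,t2]} α₁ with 0 < t1 ≤ t2, the three Abstract Machines never modify the same queue cells in the same time step: AM M1 modifies interval [0,t1−1] when α₀ is false; AM M2 modifies interval [t1,t2] when α₁ is true and the singleton [t2,t2] when α₁ is false; AM M3 modifies interval [t1,t2−1] when α₀∨α₁ is false. For any fixed values of α₀,α₁ ∈ {⊤,⊥}, the set of intervals actually modified in that step are pairwise disjoint or write consistent values (no index receives both a ⊤-modification and a ⊥-modification in the same step). -/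
/-- Index `i` receives a `⊤`-modification in the current step of the Until EM:
machine `M2` (computing `wire α₁`) writes `⊤` on the interval `[t1, t2]` when `α₁ = ⊤`. -/
def writesTop (a0 a1 : Bool) (t1 t2 : ℕ) (i : ℕ) : Prop :=
  a1 = true ∧ t1 ≤ i ∧ i ≤ t2

/-- Index `i` receives a `⊥`-modification in the current step of the Until EM:
machine `M1` (computing `wire α₀`) writes `⊥` on `[0, t1−1]` when `α₀ = ⊥`;
machine `M2` (computing `wire α₁`) writes `⊥` on `[t2, t2]` when `α₁ = ⊥`;
machine `M3` (computing `α₀ ∨ α₁`) writes `⊥` on `[t1, t2−1]` when `α₀ ∨ α₁ = ⊥`. -/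
def writesBot (a0 a1 : Bool) (t1 t2 : ℕ) (i : ℕ) : Prop :=
  (a0 = false ∧ i ≤ t1 - 1) ∨
  (a1 = false ∧ i = t2) ∨
  ((a0 || a1) = false ∧ t1 ≤ i ∧ i ≤ t2 - 1)

/-- Once `α₁ = ⊤`, only `M1` can still write `⊥`. -/
theorem writesBot_true_iff {a0 : Bool} {t1 t2 i : ℕ} :
    writesBot a0 true t1 t2 i ↔ a0 = false ∧ i ≤ t1 - 1 := by
  cases a0 <;> simp [writesBot]

theorem until_no_conflicting_modifications_general
    (t1 t2 : ℕ) (ht1 : 0 < t1) (a0 a1 : Bool) (i : ℕ) :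
    ¬ (writesTop a0 a1 t1 t2 i ∧ writesBot a0 a1 t1 t2 i) := by
  rintro ⟨⟨rfl, ht1i, -⟩, hbot⟩
  obtain ⟨-, hit1⟩ := writesBot_true_iff.mp hbot
  omega

/-- In the Evaluator Machine for `α₀ U_{[t1,t2]} α₁` with `0 < t1 ≤ t2`, the three
Abstract Machines never conflict in a single time step: for any fixed operand values
`α₀, α₁` no queue index receives both a `⊤`-modification and a `⊥`-modification. -/
theorem until_no_conflicting_modifications
    (t1 t2 : ℕ) (ht1 : 0 < t1) (ht12 : t1 ≤ t2) (a0 a1 : Bool) (i : ℕ) :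
    ¬ (writesTop a0 a1 t1 t2 i ∧ writesBot a0 a1 t1 t2 i) :=
  until_no_conflicting_modifications_general t1 t2 ht1 a0 a1 i
end

section
/- The height-balancing algorithm for ASTs produces a valid assignment: given a binary tree where each node n has a base latency l(n) ≥ 1, define recursively Head(n) and Height(n) by: for a leaf, Head(n)=l(n), Height(n)=l(n)+1; for a unary node with child c, Head(n)=l(n) and Height(n)=l(n)+1+Height(c); for a binary node with children c₁,c₂ of (recursively computed) heights h₁ ≤ h₂, increase Head(c₁) by h₂−h₁ (so its height becomes h₂) and set Height(n)=l(n)+1+h₂. Then after the algorithm runs: (i) every node satisfies Head(n) ≥ l(n), and (ii) for every binary node, the adjusted heights of its two subtrees are equal. -/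
/-- Abstract syntax trees: each node carries a label (its base latency `l(n)`, which
after the balancing algorithm becomes its `Head`). -/
inductive AST : Type
  | leaf : ℕ → AST
  | unary : ℕ → AST → AST
  | binary : ℕ → AST → AST → AST

/-- Add `δ` to the label (Head) of the root node. -/
def AST.addRoot : AST → ℕ → AST
  | .leaf l, δ => .leaf (l + δ)
  | .unary l c, δ => .unary (l + δ) c
  | .binary l c₁ c₂, δ => .binary (l + δ) c₁ c₂

/-- Height of a (Head-annotated) tree: `Head(n) + 1` plus the maximum height of its
children (0 for a leaf). -/
def AST.height : AST → ℕ
  | .leaf l => l + 1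
  | .unary l c => l + 1 + c.height
  | .binary l c₁ c₂ => l + 1 + max c₁.height c₂.height

/-- `ComputeHead`: bottom-up height balancing. Returns the Head-annotated tree together
with its height. For a leaf, `Head = l` and height `l + 1`; for a unary node,
`Head = l` and height `l + 1 + Height(child)`; for a binary node, the Head of the root
of the shorter subtree is increased by the height difference, and the height is
`l + 1 +` the common subtree height. -/
def computeHead : AST → AST × ℕ
  | .leaf l => (.leaf l, l + 1)
  | .unary l c =>
    let (c', h) := computeHead c
    (.unary l c', l + 1 + h)
  | .binary l c₁ c₂ =>
    let (c₁', h₁) := computeHead c₁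
    let (c₂', h₂) := computeHead c₂
    if h₁ ≤ h₂ then (.binary l (c₁'.addRoot (h₂ - h₁)) c₂', l + 1 + h₂)
    else (.binary l c₁' (c₂'.addRoot (h₁ - h₂)), l + 1 + h₁)

/-- All node labels are at least 1 (`l(n) ≥ 1`). -/
def AST.allGEOne : AST → Prop
  | .leaf l => 1 ≤ l
  | .unary l c => 1 ≤ l ∧ c.allGEOne
  | .binary l c₁ c₂ => 1 ≤ l ∧ c₁.allGEOne ∧ c₂.allGEOne

/-- Nodewise comparison of two trees of the same shape: every label of the first tree
is at least the corresponding label of the second. -/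
def AST.labelsGE : AST → AST → Prop
  | .leaf a, .leaf b => b ≤ a
  | .unary a c, .unary b d => b ≤ a ∧ c.labelsGE d
  | .binary a c₁ c₂, .binary b d₁ d₂ => b ≤ a ∧ c₁.labelsGE d₁ ∧ c₂.labelsGE d₂
  | _, _ => False

/-- A Head-annotated tree is balanced if at every binary node the heights of the two
subtrees are equal. -/
def AST.balanced : AST → Prop
  | .leaf _ => True
  | .unary _ c => c.balanced
  | .binary _ c₁ c₂ => c₁.balanced ∧ c₂.balanced ∧ c₁.height = c₂.height

/-!
The height returned by `computeHead` is the height of the tree it returns. Raising the Head of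
a root by `δ` touches no other node and raises the height by exactly `δ`, so at a binary node
padding the shorter subtree by the height difference equalises the two heights while keeping
both subtrees balanced and every Head above its base latency.
-/

namespace AST

@[simp]
lemma height_addRoot (t : AST) (δ : ℕ) : (t.addRoot δ).height = t.height + δ := by
  cases t <;> simp only [addRoot, height] <;> omega

@[simp]
lemma balanced_addRoot_iff (t : AST) (δ : ℕ) : (t.addRoot δ).balanced ↔ t.balanced := by
  cases t <;> rfl

lemma labelsGE.addRoot {t s : AST} (h : t.labelsGE s) (δ : ℕ) : (t.addRoot δ).labelsGE s := by
  cases t <;> cases s <;> simp only [AST.addRoot, labelsGE] at h ⊢ <;> grind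

end AST

lemma computeHead_snd (t : AST) : (computeHead t).2 = (computeHead t).1.height := by
  induction t with
  | leaf l => rfl
  | unary l c ih => simp [computeHead, AST.height, ih]
  | binary l c₁ c₂ ih₁ ih₂ =>
    simp only [computeHead]
    split <;> simp only [AST.height, AST.height_addRoot, ← ih₁, ← ih₂] <;> omega

theorem computeHead_valid_general (T : AST) :
    (computeHead T).1.labelsGE T ∧ (computeHead T).1.balanced := by
  induction T with
  | leaf l => exact ⟨le_rfl, trivial⟩
  | unary l c ih => exact ⟨⟨le_rfl, ih.1⟩, ih.2⟩
  | binary l c₁ c₂ ih₁ ih₂ =>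
    obtain ⟨hge₁, hbal₁⟩ := ih₁
    obtain ⟨hge₂, hbal₂⟩ := ih₂
    have e₁ := computeHead_snd c₁
    have e₂ := computeHead_snd c₂
    simp only [computeHead]
    split
    · refine ⟨⟨le_rfl, hge₁.addRoot _, hge₂⟩, (AST.balanced_addRoot_iff _ _).2 hbal₁, hbal₂, ?_⟩
      rw [AST.height_addRoot]; omega
    · refine ⟨⟨le_rfl, hge₁, hge₂.addRoot _⟩, hbal₁, (AST.balanced_addRoot_iff _ _).2 hbal₂, ?_⟩
      rw [AST.height_addRoot]; omega

/-- The height-balancing algorithm produces a valid assignment: (i) every node's Head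
is at least its base latency `l(n)`, and (ii) at every binary node the adjusted heights
of the two subtrees are equal. -/
theorem computeHead_valid (T : AST) (hT : T.allGEOne) :
    (computeHead T).1.labelsGE T ∧ (computeHead T).1.balanced :=
  computeHead_valid_general T
end

section
/- In the height-balancing algorithm, the final Height of the root equals the sum over the unique root-to-leaf path through any leaf of (Head(n)+1) for all nodes n on that path; in particular, after balancing, this sum is the same for every leaf of the tree. -/
/-- For each leaf `f` of the tree, the sum over the root-to-`f` path of `Head(n) + 1`;
one entry of the list per leaf, in left-to-right order. -/
def AST.pathSums : AST → List ℕ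
  | .leaf l => [l + 1]
  | .unary l c => c.pathSums.map (· + (l + 1))
  | .binary l c₁ c₂ => (c₁.pathSums ++ c₂.pathSums).map (· + (l + 1))

/-! Adding `δ` to the Head of a root shifts its height and all its path sums by `δ`, so
"every path sum equals the height" survives it; at a binary node the balancing makes both
children equally high, so the invariant passes from the children to the node. -/

namespace AST

lemma pathSums_addRoot (T : AST) (δ : ℕ) :
    (T.addRoot δ).pathSums = T.pathSums.map (· + δ) := by
  cases T <;> simp [addRoot, pathSums, List.map_map, Nat.add_right_comm _ δ 1, Nat.add_assoc]

lemma height_addRoot_s14 (T : AST) (δ : ℕ) : (T.addRoot δ).height = T.height + δ := by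
  cases T <;> simp only [addRoot, height] <;> omega

def PathSumsEqHeight (T : AST) : Prop :=
  ∀ s ∈ T.pathSums, s = T.height

lemma PathSumsEqHeight.addRoot {T : AST} (hT : T.PathSumsEqHeight) (δ : ℕ) :
    (T.addRoot δ).PathSumsEqHeight := by
  simp only [PathSumsEqHeight, pathSums_addRoot, height_addRoot_s14, List.mem_map]
  rintro _ ⟨s, hs, rfl⟩
  rw [hT s hs]

lemma PathSumsEqHeight.unary {c : AST} (hc : c.PathSumsEqHeight) (l : ℕ) :
    (unary l c).PathSumsEqHeight := by
  simp only [PathSumsEqHeight, pathSums, height, List.mem_map]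
  rintro _ ⟨s, hs, rfl⟩
  rw [hc s hs]
  omega

lemma PathSumsEqHeight.binary {c₁ c₂ : AST} (hc₁ : c₁.PathSumsEqHeight)
    (hc₂ : c₂.PathSumsEqHeight) (heq : c₁.height = c₂.height) (l : ℕ) :
    (binary l c₁ c₂).PathSumsEqHeight := by
  simp only [PathSumsEqHeight, pathSums, height, heq, max_self, List.mem_map, List.mem_append]
  rintro _ ⟨s, hs | hs, rfl⟩
  · rw [hc₁ s hs, heq]; omega
  · rw [hc₂ s hs]; omega

end AST

lemma computeHead_snd_eq_height (T : AST) : (computeHead T).2 = (computeHead T).1.height := by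
  induction T with
  | leaf l => rfl
  | unary l c ih => simp only [computeHead, AST.height, ih]
  | binary l c₁ c₂ ih₁ ih₂ =>
    simp only [computeHead]
    split_ifs <;> simp only [AST.height, AST.height_addRoot_s14, ← ih₁, ← ih₂] <;> omega

lemma computeHead_fst_pathSumsEqHeight (T : AST) : (computeHead T).1.PathSumsEqHeight := by
  induction T with
  | leaf l => simp [computeHead, AST.PathSumsEqHeight, AST.pathSums, AST.height]
  | unary l c ih => exact ih.unary l
  | binary l c₁ c₂ ih₁ ih₂ =>
    have h₁ := computeHead_snd_eq_height c₁
    have h₂ := computeHead_snd_eq_height c₂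
    simp only [computeHead]
    split_ifs
    · exact (ih₁.addRoot _).binary ih₂ (by rw [AST.height_addRoot_s14]; omega) l
    · exact ih₁.binary (ih₂.addRoot _) (by rw [AST.height_addRoot_s14]; omega) l

theorem computeHead_pathSums_general (T : AST) :
    ∀ s ∈ (computeHead T).1.pathSums, s = (computeHead T).1.height :=
  computeHead_fst_pathSumsEqHeight T

/-- After the height-balancing algorithm, the Height of the root equals the sum of
`Head(n) + 1` over the root-to-leaf path, for every leaf of the tree; in particular
this sum is the same for all leaves. -/
theorem computeHead_pathSums (T : AST) (hT : T.allGEOne) :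
    ∀ s ∈ (computeHead T).1.pathSums, s = (computeHead T).1.height :=
  computeHead_pathSums_general T
end
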